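/- On H^N(-a²), the H¹-closures of dΛ^{k-1}_c and d*Λ^{k+1}_c are orthogonal subspaces of H¹(Λ^k) with respect to the inner product [u,v] = (u,v)_{L²} + (∇u,∇v)_{L²}. -/
import Mathlib


/-- An abstract setting for the analysis of differential forms and currents on a
complete Riemannian manifold without boundary.  `Omega` is the real vector space of
currents (distributional differential forms, of all degrees combined), `Tens` the
space of (distributional) covariant tensors, the targets of the covariant
derivative.  The submodules single out the currents of pure degree `j`, the smooth
forms, the smooth compactly supported forms and the square integrable forms.  The
fields record the standard structure: exterior derivative `d`, codifferential
`dstar`, Levi-Civita covariant derivative `nabla` and its formal adjoint,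
the `L²` pairings, the pointwise inner products, the Laplace–Beltrami operator on
functions, together with their standard properties, including the general
Bochner–Weitzenböck formula with Weitzenböck curvature operator `weitzCurv`. -/
structure ManifoldSetting where
  /-- the points of the manifold -/
  Pt : Type
  /-- currents (distributional forms), all degrees combined -/
  Omega : Type
  /-- covariant tensors -/
  Tens : Type
  [grpO : AddCommGroup Omega]
  [modO : Module ℝ Omega]
  [grpT : AddCommGroup Tens]
  [modT : Module ℝ Tens]
  /-- currents of pure degree `j` -/
  deg : ℕ → Submodule ℝ Omega
  /-- smooth forms -/
  smooth : Submodule ℝ Omega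
  /-- smooth compactly supported forms -/
  cpt : Submodule ℝ Omega
  /-- square integrable forms -/
  L2 : Submodule ℝ Omega
  /-- exterior derivative (in the distributional sense on currents) -/
  d : Omega →ₗ[ℝ] Omega
  /-- the codifferential `d*`, formal adjoint of `d` -/
  dstar : Omega →ₗ[ℝ] Omega
  /-- the covariant derivative -/
  nabla : Omega →ₗ[ℝ] Tens
  /-- the formal adjoint of the covariant derivative -/
  nablaStar : Tens →ₗ[ℝ] Omega
  /-- the `L²` inner product of forms -/
  inner2 : Omega → Omega → ℝ
  /-- the `L²` inner product of tensors -/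
  innerT : Tens → Tens → ℝ
  /-- the pointwise inner product of forms -/
  ip : Omega → Omega → Pt → ℝ
  /-- the pointwise inner product of tensors -/
  ipT : Tens → Tens → Pt → ℝ
  /-- the Laplace–Beltrami operator on functions -/
  lapF : (Pt → ℝ) → Pt → ℝ
  inner2_symm : ∀ u v, inner2 u v = inner2 v u
  inner2_add_left : ∀ u v w, inner2 (u + v) w = inner2 u w + inner2 v w
  inner2_smul_left : ∀ (c : ℝ) u v, inner2 (c • u) v = c * inner2 u v
  inner2_nonneg : ∀ u, 0 ≤ inner2 u u
  innerT_symm : ∀ s t, innerT s t = innerT t s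
  innerT_add_left : ∀ s t r, innerT (s + t) r = innerT s r + innerT t r
  innerT_smul_left : ∀ (c : ℝ) s t, innerT (c • s) t = c * innerT s t
  innerT_nonneg : ∀ t, 0 ≤ innerT t t
  d_d : ∀ u, d (d u) = 0
  dstar_dstar : ∀ u, dstar (dstar u) = 0
  /-- adjointness of `d` and `d*` when one argument has compact support -/
  adj : ∀ u v, u ∈ cpt ∨ v ∈ cpt → inner2 (d u) v = inner2 u (dstar v)
  /-- adjointness of `nabla` and `nablaStar` -/
  adjN : ∀ u t, u ∈ cpt → innerT (nabla u) t = inner2 u (nablaStar t)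
  cpt_le_smooth : cpt ≤ smooth
  cpt_le_L2 : cpt ≤ L2
  d_smooth : ∀ u, u ∈ smooth → d u ∈ smooth
  dstar_smooth : ∀ u, u ∈ smooth → dstar u ∈ smooth
  d_cpt : ∀ u, u ∈ cpt → d u ∈ cpt
  dstar_cpt : ∀ u, u ∈ cpt → dstar u ∈ cpt
  d_deg : ∀ (j : ℕ) u, u ∈ deg j → d u ∈ deg (j + 1)
  dstar_deg : ∀ (j : ℕ) u, u ∈ deg (j + 1) → dstar u ∈ deg j
  /-- the Weitzenböck curvature operator -/
  weitzCurv : Omega →ₗ[ℝ] Omega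
  /-- the general Bochner–Weitzenböck formula:
  `∇*∇ u = (d d* + d* d) u + (Weitzenböck curvature) u` on smooth forms -/
  bochnerWeitzenboeck : ∀ u, u ∈ smooth →
    nablaStar (nabla u) = dstar (d u) + d (dstar u) + weitzCurv u
  /-- the general pointwise Bochner formula
  `½ Δ|u|² = g(Δu, u) + |∇u|² − g((Weitzenböck curvature) u, u)` on smooth forms,
  where `Δu = −(d d* + d* d) u` is the (negative) Hodge Laplacian -/
  bochnerPointwise : ∀ u, u ∈ smooth → ∀ x,
    (1 / 2) * lapF (fun y => ip u u y) x
      = ip (-(dstar (d u) + d (dstar u))) u x + ipT (nabla u) (nabla u) x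
        - ip (weitzCurv u) u x

attribute [instance] ManifoldSetting.grpO ManifoldSetting.modO
  ManifoldSetting.grpT ManifoldSetting.modT

namespace ManifoldSetting

variable (S : ManifoldSetting)

/-- The `H¹` inner product `[u, v] = (u, v)_{L²} + (∇u, ∇v)_{L²}`. -/
def h1ip (u v : S.Omega) : ℝ := S.inner2 u v + S.innerT (S.nabla u) (S.nabla v)

/-- The closure of a set of forms in the `H¹` norm. -/
def h1closure (A : Set S.Omega) : Set S.Omega :=
  {u | ∀ ε : ℝ, 0 < ε → ∃ s ∈ A, S.h1ip (u - s) (u - s) < ε}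

/-- The Sobolev space `H¹` of `k`-forms: the `H¹`-closure of the smooth compactly
supported `k`-forms. -/
def H1 (k : ℕ) : Set S.Omega :=
  S.h1closure ((S.cpt ⊓ S.deg k : Submodule ℝ S.Omega) : Set S.Omega)

/-- A current is harmonic if its Hodge Laplacian `−Δ = d d* + d* d` vanishes. -/
def Harmonic (u : S.Omega) : Prop := S.dstar (S.d u) + S.d (S.dstar u) = 0

end ManifoldSetting

/-- The simply connected space form `H^N(−a²)` of constant sectional curvature
`−a²` (with `a ≥ 0`, so possibly `ℝ^N`): a `ManifoldSetting` in which the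
Weitzenböck curvature operator acts on `k`-forms as the scalar `a² k (N − k)`. -/
structure SpaceFormSetting (N : ℕ) (a : ℝ) extends ManifoldSetting where
  /-- constant sectional curvature `−a²`: the Weitzenböck curvature operator acts
  on (smooth) `k`-forms as multiplication by `a² k (N − k)` -/
  constCurv : ∀ (k : ℕ) u, u ∈ smooth → u ∈ deg k →
    weitzCurv u = (a ^ 2 * (k : ℝ) * ((N : ℝ) - (k : ℝ))) • u

namespace ManifoldSetting

variable (S : ManifoldSetting)

lemma inner2_zero_left' (v : S.Omega) : S.inner2 0 v = 0 := by
  have := S.inner2_smul_left 0 0 v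
  simpa using this

lemma inner2_add_right' (u v w : S.Omega) :
    S.inner2 u (v + w) = S.inner2 u v + S.inner2 u w := by
  rw [S.inner2_symm, S.inner2_add_left, S.inner2_symm v u, S.inner2_symm w u]

lemma inner2_smul_right' (c : ℝ) (u v : S.Omega) :
    S.inner2 u (c • v) = c * S.inner2 u v := by
  rw [S.inner2_symm, S.inner2_smul_left, S.inner2_symm]

lemma h1ip_symm' (u v : S.Omega) : S.h1ip u v = S.h1ip v u := by
  unfold h1ip; rw [S.inner2_symm, S.innerT_symm]

lemma h1ip_add_left' (u v w : S.Omega) :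
    S.h1ip (u + v) w = S.h1ip u w + S.h1ip v w := by
  unfold h1ip
  rw [S.inner2_add_left, map_add, S.innerT_add_left]; ring

lemma h1ip_smul_left' (c : ℝ) (u v : S.Omega) :
    S.h1ip (c • u) v = c * S.h1ip u v := by
  unfold h1ip
  rw [S.inner2_smul_left, map_smul, S.innerT_smul_left]; ring

lemma h1ip_add_right' (u v w : S.Omega) :
    S.h1ip u (v + w) = S.h1ip u v + S.h1ip u w := by
  rw [S.h1ip_symm', S.h1ip_add_left', S.h1ip_symm' v u, S.h1ip_symm' w u]

lemma h1ip_smul_right' (c : ℝ) (u v : S.Omega) :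
    S.h1ip u (c • v) = c * S.h1ip u v := by
  rw [S.h1ip_symm', S.h1ip_smul_left', S.h1ip_symm']

lemma h1ip_sub_left' (u v w : S.Omega) :
    S.h1ip (u - v) w = S.h1ip u w - S.h1ip v w := by
  have : u - v = u + (-1 : ℝ) • v := by
    rw [neg_one_smul]; abel
  rw [this, S.h1ip_add_left', S.h1ip_smul_left']; ring

lemma h1ip_sub_right' (u v w : S.Omega) :
    S.h1ip u (v - w) = S.h1ip u v - S.h1ip u w := by
  rw [S.h1ip_symm', S.h1ip_sub_left', S.h1ip_symm' v u, S.h1ip_symm' w u]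

lemma h1ip_nonneg' (u : S.Omega) : 0 ≤ S.h1ip u u :=
  add_nonneg (S.inner2_nonneg u) (S.innerT_nonneg _)

/-- Cauchy–Schwarz for the positive semidefinite form `h1ip`. -/
lemma h1ip_cauchy (x y : S.Omega) :
    (S.h1ip x y) ^ 2 ≤ S.h1ip x x * S.h1ip y y := by
  have key : ∀ t : ℝ, 0 ≤ S.h1ip x x + 2 * t * S.h1ip x y + t ^ 2 * S.h1ip y y := by
    intro t
    have h := S.h1ip_nonneg' (x + t • y)
    simp only [S.h1ip_add_left', S.h1ip_add_right', S.h1ip_smul_left',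
      S.h1ip_smul_right', S.h1ip_symm' y x] at h
    nlinarith [h]
  by_cases hy : S.h1ip y y = 0
  · have hB : S.h1ip x y = 0 := by
      by_contra hB
      have h1 := key (-(S.h1ip x x + 1) / (2 * S.h1ip x y))
      rw [hy, mul_zero] at h1
      have ht : 2 * (-(S.h1ip x x + 1) / (2 * S.h1ip x y)) * S.h1ip x y
          = -(S.h1ip x x + 1) := by field_simp
      rw [ht] at h1
      linarith
    rw [hB, hy]; nlinarith [S.h1ip_nonneg' x]
  · have hpos : 0 < S.h1ip y y := lt_of_le_of_ne (S.h1ip_nonneg' y) (Ne.symm hy)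
    have h := S.h1ip_nonneg' ((S.h1ip y y) • x - (S.h1ip x y) • y)
    simp only [S.h1ip_sub_left', S.h1ip_sub_right', S.h1ip_smul_left',
      S.h1ip_smul_right', S.h1ip_symm' y x] at h
    nlinarith [h, hpos]

lemma h1ip_abs_le (x y : S.Omega) :
    |S.h1ip x y| ≤ Real.sqrt (S.h1ip x x) * Real.sqrt (S.h1ip y y) := by
  have h := S.h1ip_cauchy x y
  have h1 : |S.h1ip x y| = Real.sqrt ((S.h1ip x y) ^ 2) := by
    rw [Real.sqrt_sq_eq_abs]
  rw [h1, ← Real.sqrt_mul (S.h1ip_nonneg' x)]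
  exact Real.sqrt_le_sqrt h

/-- Triangle inequality for the `H¹` seminorm. -/
lemma h1ip_sqrt_triangle (x y : S.Omega) :
    Real.sqrt (S.h1ip (x + y) (x + y)) ≤
      Real.sqrt (S.h1ip x x) + Real.sqrt (S.h1ip y y) := by
  have hx := S.h1ip_nonneg' x
  have hy := S.h1ip_nonneg' y
  have hB : S.h1ip x y ≤ Real.sqrt (S.h1ip x x) * Real.sqrt (S.h1ip y y) :=
    le_trans (le_abs_self _) (S.h1ip_abs_le x y)
  have hsx : Real.sqrt (S.h1ip x x) ^ 2 = S.h1ip x x := Real.sq_sqrt hx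
  have hsy : Real.sqrt (S.h1ip y y) ^ 2 = S.h1ip y y := Real.sq_sqrt hy
  have hexp : S.h1ip (x + y) (x + y) ≤
      (Real.sqrt (S.h1ip x x) + Real.sqrt (S.h1ip y y)) ^ 2 := by
    rw [S.h1ip_add_left', S.h1ip_add_right', S.h1ip_add_right',
      S.h1ip_symm' y x]
    nlinarith [hB, hsx, hsy]
  calc Real.sqrt (S.h1ip (x + y) (x + y))
      ≤ Real.sqrt ((Real.sqrt (S.h1ip x x) + Real.sqrt (S.h1ip y y)) ^ 2) :=
        Real.sqrt_le_sqrt hexp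
    _ = |Real.sqrt (S.h1ip x x) + Real.sqrt (S.h1ip y y)| := Real.sqrt_sq_eq_abs _
    _ = Real.sqrt (S.h1ip x x) + Real.sqrt (S.h1ip y y) :=
        abs_of_nonneg (add_nonneg (Real.sqrt_nonneg _) (Real.sqrt_nonneg _))

lemma h1ip_expand' (u v s t : S.Omega) :
    S.h1ip u v = S.h1ip (u - s) (v - t) + S.h1ip (u - s) t
      + S.h1ip s (v - t) + S.h1ip s t := by
  simp only [S.h1ip_sub_left', S.h1ip_sub_right']; ring

end ManifoldSetting

/-- Core orthogonality: on a space form, `dα ⊥ d*β` in `H¹` for compactly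
supported smooth forms `α` and `β` of degrees `k-1` and `k+1`. -/
lemma core_orth {N : ℕ} {a : ℝ} (S : SpaceFormSetting N a) (k : ℕ)
    (α β : S.Omega) (hα : α ∈ S.cpt) (hβc : β ∈ S.cpt) (hβd : β ∈ S.deg (k + 1)) :
    S.h1ip (S.d α) (S.dstar β) = 0 := by
  set w := S.dstar β with hw
  have hwc : w ∈ S.cpt := S.dstar_cpt β hβc
  have hws : w ∈ S.smooth := S.cpt_le_smooth hwc
  have hwdeg : w ∈ S.deg k := S.dstar_deg k β hβd
  have hdαc : S.d α ∈ S.cpt := S.d_cpt α hα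
  -- first term vanishes
  have T1 : S.inner2 (S.d α) w = 0 := by
    have h := S.adj (S.d α) β (Or.inl hdαc)
    rw [S.d_d] at h
    rw [hw, ← h, S.inner2_zero_left']
  -- second term
  have T2 : S.innerT (S.nabla (S.d α)) (S.nabla w)
      = S.inner2 (S.d α) (S.nablaStar (S.nabla w)) :=
    S.adjN (S.d α) (S.nabla w) hdαc
  have hBW := S.bochnerWeitzenboeck w hws
  have hdsw : S.dstar w = 0 := S.dstar_dstar β
  have hcurv := S.constCurv k w hws hwdeg
  set c : ℝ := a ^ 2 * (k : ℝ) * ((N : ℝ) - (k : ℝ)) with hc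
  have hBW' : S.nablaStar (S.nabla w) = S.dstar (S.d w) + c • w := by
    rw [hBW, hdsw, map_zero, hcurv]; abel
  have T3 : S.inner2 (S.d α) (S.dstar (S.d w)) = 0 := by
    have h := S.adj (S.d α) (S.d w) (Or.inl hdαc)
    rw [S.d_d] at h
    rw [← h, S.inner2_zero_left']
  have T2' : S.innerT (S.nabla (S.d α)) (S.nabla w) = 0 := by
    rw [T2, hBW', S.inner2_add_right', T3, S.inner2_smul_right', T1]
    ring
  show S.inner2 (S.d α) w + S.innerT (S.nabla (S.d α)) (S.nabla w) = 0
  rw [T1, T2']; ring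

/-- On `H^N(−a²)`, the `H¹`-closures of `d Λ^{k-1}_c` and
`d* Λ^{k+1}_c` are orthogonal subspaces of `H¹(Λ^k)` with respect to the inner
product `[u, v] = (u, v)_{L²} + (∇u, ∇v)_{L²}`. -/
theorem closures_orthogonal (N : ℕ) (a : ℝ) (ha : 0 ≤ a)
    (S : SpaceFormSetting N a) (k : ℕ) (hk : 1 ≤ k) (u v : S.Omega)
    (hu : u ∈ S.h1closure ((fun x => S.d x) '' ((S.cpt ⊓ S.deg (k - 1) : Submodule ℝ S.Omega) : Set S.Omega)))
    (hv : v ∈ S.h1closure ((fun x => S.dstar x) '' ((S.cpt ⊓ S.deg (k + 1) : Submodule ℝ S.Omega) : Set S.Omega))) :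
    S.h1ip u v = 0 := by
  set Ku : ℝ := Real.sqrt (S.h1ip u u) with hKu
  set Kv : ℝ := Real.sqrt (S.h1ip v v) with hKv
  have hKu0 : 0 ≤ Ku := Real.sqrt_nonneg _
  have hKv0 : 0 ≤ Kv := Real.sqrt_nonneg _
  set C : ℝ := 3 + Ku + Kv with hC
  have hCpos : 0 < C := by positivity
  have main : ∀ r : ℝ, 0 < r → |S.h1ip u v| ≤ r := by
    intro r hr
    set δ : ℝ := min 1 (r / C) with hδ
    have hδpos : 0 < δ := lt_min one_pos (div_pos hr hCpos)
    have hδ1 : δ ≤ 1 := min_le_left _ _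
    have hδr : δ * C ≤ r := by
      have h1 : δ ≤ r / C := min_le_right _ _
      calc δ * C ≤ (r / C) * C := by nlinarith [hCpos]
        _ = r := by field_simp
    have hε : (0 : ℝ) < δ ^ 2 := by positivity
    obtain ⟨s, hsA, hs⟩ := hu (δ ^ 2) hε
    obtain ⟨t, htA, ht⟩ := hv (δ ^ 2) hε
    obtain ⟨α, hαmem, hαeq⟩ := hsA
    obtain ⟨β, hβmem, hβeq⟩ := htA
    have hαc : α ∈ S.cpt := hαmem.1
    have hβc : β ∈ S.cpt := hβmem.1
    have hβd : β ∈ S.deg (k + 1) := hβmem.2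
    have hst : S.h1ip s t = 0 := by
      rw [← hαeq, ← hβeq]
      exact core_orth S k α β hαc hβc hβd
    -- seminorms of the errors
    set du : ℝ := Real.sqrt (S.h1ip (u - s) (u - s)) with hdu
    set dv : ℝ := Real.sqrt (S.h1ip (v - t) (v - t)) with hdv
    have hdu0 : 0 ≤ du := Real.sqrt_nonneg _
    have hdv0 : 0 ≤ dv := Real.sqrt_nonneg _
    have hduδ : du ≤ δ := by
      have : S.h1ip (u - s) (u - s) ≤ δ ^ 2 := hs.le
      calc du ≤ Real.sqrt (δ ^ 2) := Real.sqrt_le_sqrt this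
        _ = δ := by rw [Real.sqrt_sq hδpos.le]
    have hdvδ : dv ≤ δ := by
      have : S.h1ip (v - t) (v - t) ≤ δ ^ 2 := ht.le
      calc dv ≤ Real.sqrt (δ ^ 2) := Real.sqrt_le_sqrt this
        _ = δ := by rw [Real.sqrt_sq hδpos.le]
    -- seminorms of s and t
    have hsnorm : Real.sqrt (S.h1ip s s) ≤ Ku + du := by
      have h := S.h1ip_sqrt_triangle u (s - u)
      have h2 : u + (s - u) = s := by abel
      rw [h2] at h
      have h3 : S.h1ip (s - u) (s - u) = S.h1ip (u - s) (u - s) := by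
        have : s - u = -(u - s) := by abel
        rw [this]
        have hn : ∀ x y : S.Omega, S.h1ip (-x) y = -S.h1ip x y := by
          intro x y
          have := S.h1ip_smul_left' (-1) x y
          simpa [neg_one_smul] using this
        rw [hn, S.h1ip_symm', hn, S.h1ip_symm']
        ring
      rw [h3] at h
      exact h
    have htnorm : Real.sqrt (S.h1ip t t) ≤ Kv + dv := by
      have h := S.h1ip_sqrt_triangle v (t - v)
      have h2 : v + (t - v) = t := by abel
      rw [h2] at h
      have h3 : S.h1ip (t - v) (t - v) = S.h1ip (v - t) (v - t) := by
        have : t - v = -(v - t) := by abel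
        rw [this]
        have hn : ∀ x y : S.Omega, S.h1ip (-x) y = -S.h1ip x y := by
          intro x y
          have := S.h1ip_smul_left' (-1) x y
          simpa [neg_one_smul] using this
        rw [hn, S.h1ip_symm', hn, S.h1ip_symm']
        ring
      rw [h3] at h
      exact h
    -- the three cross terms
    have b1 : |S.h1ip (u - s) (v - t)| ≤ du * dv := S.h1ip_abs_le _ _
    have b2 : |S.h1ip (u - s) t| ≤ du * (Kv + dv) := by
      refine le_trans (S.h1ip_abs_le _ _) ?_
      exact mul_le_mul_of_nonneg_left htnorm hdu0
    have b3 : |S.h1ip s (v - t)| ≤ (Ku + du) * dv := by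
      refine le_trans (S.h1ip_abs_le _ _) ?_
      exact mul_le_mul_of_nonneg_right hsnorm hdv0
    have hexp := S.h1ip_expand' u v s t
    rw [hst, add_zero] at hexp
    have habs : |S.h1ip u v| ≤ du * dv + du * (Kv + dv) + (Ku + du) * dv := by
      rw [hexp]
      calc |S.h1ip (u - s) (v - t) + S.h1ip (u - s) t + S.h1ip s (v - t)|
          ≤ |S.h1ip (u - s) (v - t)| + |S.h1ip (u - s) t| + |S.h1ip s (v - t)| := by
            exact le_trans (abs_add_le _ _) (by linarith [abs_add_le (S.h1ip (u - s) (v - t)) (S.h1ip (u - s) t)])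
        _ ≤ du * dv + du * (Kv + dv) + (Ku + du) * dv := by linarith
    have hfinal : du * dv + du * (Kv + dv) + (Ku + du) * dv ≤ δ * C := by
      rw [hC]
      nlinarith [hduδ, hdvδ, hδ1, hdu0, hdv0, hKu0, hKv0, hδpos.le]
    linarith
  by_contra hne
  have habs : 0 < |S.h1ip u v| := abs_pos.mpr hne
  have := main (|S.h1ip u v| / 2) (by linarith)
  linarith
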